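/- arXiv:2502.00601 — 2 statements merged into one kernel-verified Lean document; each statement's English description precedes it below -/
import Mathlib

section
/- Let X be a nonempty finite state space, U a nonempty finite action space, γ ∈ [0,1), and π a policy. Let r : X × U → ℝ be a reward function with values in [0,1], and let p^S and p^T be two transition kernels on X × U with p^T(x′|x,u) > 0 for all x, u, x′. Let V_{p^S}^π and V_{p^T}^π be the value functions of π under kernels p^S and p^T (same reward r, Q-functions satisfying their Bellman equations). Let d be a probability mass function on X, and suppose ε ≥ 0 satisfies √( (1/2) D_KL(p^S(·|x,u) ‖ p^T(·|x,u)) ) ≤ ε for every (x,u) ∈ X × U. Then Σ_{s∈X} d(s) V_{p^T}^π(s) ≥ Σ_{s∈X} d(s) V_{p^S}^π(s) − γε/(1−γ)². (Theorem 1.) -/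
/-!
By Pinsker's inequality the hypothesis gives `∑ x', |pS(x'|x,u) - pT(x'|x,u)| ≤ 2ε`. Since `V_S`
takes values in `[0, 1/(1-γ)]`, centering it at `1/(2(1-γ))` bounds the one-step drift
`∑ x', (pS - pT)(x'|x,u) V_S(x')` by `ε/(1-γ)`. Writing the Bellman equations for both kernels, the
gap `V_S - V_T` is then at most `γ (ε/(1-γ) + max (V_S - V_T))`, so its maximum, and hence its
`d`-average, is at most `γε/(1-γ)²`.

Pinsker's inequality itself follows from Sedrakyan's form of Cauchy–Schwarz with weights `p + 2q`
and the pointwise bound `3(t-1)² ≤ 2(t+2)·klFun t`, where `klFun t = t log t + 1 - t`.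
-/

open Finset

section KLBound

open Real Set InformationTheory

lemma isMinOn_of_hasDerivAt_nonpos_of_nonneg {f f' : ℝ → ℝ} {a c : ℝ} (hac : a ≤ c)
    (hcont : ContinuousOn f (Ici a)) (hf : ∀ x ∈ Ioi a, HasDerivAt f (f' x) x)
    (hleft : ∀ x ∈ Ioo a c, f' x ≤ 0) (hright : ∀ x ∈ Ioi c, 0 ≤ f' x) :
    IsMinOn f (Ici a) c := by
  intro t (ht : a ≤ t)
  have hsub : ∀ {s u : ℝ}, a ≤ s → Icc s u ⊆ Ici a := fun hs _ hx => le_trans hs hx.1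
  rcases le_total t c with htc | hct
  · have hanti : AntitoneOn f (Icc t c) := by
      refine antitoneOn_of_hasDerivWithinAt_nonpos (f' := f') (convex_Icc t c)
        (hcont.mono (hsub ht)) ?_ ?_ <;> rw [interior_Icc] <;> intro x hx
      · exact (hf x (lt_of_le_of_lt ht hx.1)).hasDerivWithinAt
      · exact hleft x ⟨lt_of_le_of_lt ht hx.1, hx.2⟩
    exact hanti ⟨le_rfl, htc⟩ ⟨htc, le_rfl⟩ htc
  · have hmono : MonotoneOn f (Icc c t) := by
      refine monotoneOn_of_hasDerivWithinAt_nonneg (f' := f') (convex_Icc c t)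
        (hcont.mono (hsub hac)) ?_ ?_ <;> rw [interior_Icc] <;> intro x hx
      · exact (hf x (lt_of_le_of_lt hac hx.1)).hasDerivWithinAt
      · exact hright x hx.1
    exact hmono ⟨le_rfl, hct⟩ ⟨hct, le_rfl⟩ hct

lemma monotoneOn_add_one_mul_log_sub_two_mul :
    MonotoneOn (fun t => (t + 1) * log t - 2 * (t - 1)) (Ioi 0) := by
  have hderiv : ∀ t ∈ Ioi (0 : ℝ),
      HasDerivAt (fun t => (t + 1) * log t - 2 * (t - 1)) (log t + t⁻¹ - 1) t := by
    intro t (ht : 0 < t)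
    refine ((((hasDerivAt_id' t).add_const 1).mul (hasDerivAt_log ht.ne')).sub
      (((hasDerivAt_id' t).sub_const 1).const_mul 2)).congr_deriv ?_
    field_simp
    ring
  refine monotoneOn_of_hasDerivWithinAt_nonneg (f' := fun t => log t + t⁻¹ - 1) (convex_Ioi 0)
    (fun t ht => (hderiv t ht).continuousAt.continuousWithinAt) ?_ ?_ <;>
    rw [interior_Ioi] <;> intro t ht
  · exact (hderiv t ht).hasDerivWithinAt
  · linarith [one_sub_inv_le_log_of_pos (show (0 : ℝ) < t from ht)]

lemma three_mul_sq_sub_one_le_klFun {t : ℝ} (ht : 0 ≤ t) :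
    3 * (t - 1) ^ 2 ≤ 2 * (t + 2) * klFun t := by
  set G : ℝ → ℝ := fun t => (t + 1) * log t - 2 * (t - 1)
  have hG1 : G 1 = 0 := by simp [G]
  have hderiv : ∀ t ∈ Ioi (0 : ℝ),
      HasDerivAt (fun t => 2 * (t + 2) * klFun t - 3 * (t - 1) ^ 2) (4 * G t) t := by
    intro t (ht : 0 < t)
    refine (((((hasDerivAt_id' t).add_const 2).const_mul 2).mul (hasDerivAt_klFun ht.ne')).sub
      ((((hasDerivAt_id' t).sub_const 1).pow 2).const_mul 3)).congr_deriv ?_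
    simp only [G, klFun_apply]
    ring
  have hmin := isMinOn_of_hasDerivAt_nonpos_of_nonneg zero_le_one
    (by unfold klFun; fun_prop) hderiv
    (fun x hx => by
      have := monotoneOn_add_one_mul_log_sub_two_mul hx.1 (mem_Ioi.2 one_pos) hx.2.le
      linarith)
    (fun x hx => by
      have := monotoneOn_add_one_mul_log_sub_two_mul (mem_Ioi.2 one_pos)
        (mem_Ioi.2 (one_pos.trans hx)) (le_of_lt hx)
      linarith) (mem_Ici.2 ht)
  norm_num [klFun_one] at hmin
  linarith

lemma three_mul_sq_sub_le {a b : ℝ} (ha : 0 ≤ a) (hb : 0 < b) :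
    3 * (a - b) ^ 2 ≤ 2 * (a + 2 * b) * (a * log (a / b) - a + b) := by
  obtain ⟨t, ht, rfl⟩ : ∃ t, 0 ≤ t ∧ a = t * b := ⟨a / b, div_nonneg ha hb.le, by field_simp⟩
  rw [mul_div_cancel_right₀ t hb.ne']
  calc 3 * (t * b - b) ^ 2 = b ^ 2 * (3 * (t - 1) ^ 2) := by ring
    _ ≤ b ^ 2 * (2 * (t + 2) * klFun t) :=
        mul_le_mul_of_nonneg_left (three_mul_sq_sub_one_le_klFun ht) (sq_nonneg b)
    _ = 2 * (t * b + 2 * b) * (t * b * log t - t * b + b) := by rw [klFun_apply]; ring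

theorem pinsker {ι : Type*} [Fintype ι] {p q : ι → ℝ} (hp : ∀ i, 0 ≤ p i) (hq : ∀ i, 0 < q i)
    (hp1 : ∑ i, p i = 1) (hq1 : ∑ i, q i = 1) :
    (∑ i, |p i - q i|) ^ 2 ≤ 2 * ∑ i, p i * log (p i / q i) := by
  have hw_pos : ∀ i, 0 < p i + 2 * q i := fun i => by linarith [hp i, hq i]
  have hw_sum : ∑ i, (p i + 2 * q i) = 3 := by
    rw [sum_add_distrib, ← mul_sum, hp1, hq1]; norm_num
  have hsedrakyan := sq_sum_div_le_sum_sq_div univ (fun i => |p i - q i|) fun i _ => hw_pos i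
  rw [hw_sum] at hsedrakyan
  have hterm : ∀ i, 3 * (|p i - q i| ^ 2 / (p i + 2 * q i)) ≤
      2 * (p i * log (p i / q i) - p i + q i) := fun i => by
    rw [sq_abs, mul_div_assoc', div_le_iff₀ (hw_pos i)]
    linarith [three_mul_sq_sub_le (hp i) (hq i)]
  have hkl : ∑ i, (p i * log (p i / q i) - p i + q i) = ∑ i, p i * log (p i / q i) := by
    rw [sum_add_distrib, sum_sub_distrib, hp1, hq1]; ring
  calc (∑ i, |p i - q i|) ^ 2 = 3 * ((∑ i, |p i - q i|) ^ 2 / 3) := by ring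
    _ ≤ 3 * ∑ i, |p i - q i| ^ 2 / (p i + 2 * q i) := by gcongr
    _ ≤ ∑ i, 2 * (p i * log (p i / q i) - p i + q i) := by
        rw [mul_sum]; exact sum_le_sum fun i _ => hterm i
    _ = 2 * ∑ i, p i * log (p i / q i) := by rw [← mul_sum, hkl]

lemma sum_abs_sub_le_two_mul_of_sqrt_le {ι : Type*} [Fintype ι] {p q : ι → ℝ}
    (hp : ∀ i, 0 ≤ p i) (hq : ∀ i, 0 < q i) (hp1 : ∑ i, p i = 1) (hq1 : ∑ i, q i = 1) {ε : ℝ}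
    (hε : √((1 / 2) * ∑ i, p i * log (p i / q i)) ≤ ε) :
    ∑ i, |p i - q i| ≤ 2 * ε := by
  have hhalf : |(∑ i, |p i - q i|) / 2| ≤ √((1 / 2) * ∑ i, p i * log (p i / q i)) :=
    abs_le_sqrt (by linarith [pinsker hp hq hp1 hq1])
  linarith [le_abs_self ((∑ i, |p i - q i|) / 2)]

end KLBound

section Averaging

variable {ι : Type*} [Fintype ι] {w f : ι → ℝ}

lemma sum_mul_le_of_forall_le {M : ℝ} (hw0 : ∀ i, 0 ≤ w i) (hw1 : ∑ i, w i = 1)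
    (hf : ∀ i, f i ≤ M) : ∑ i, w i * f i ≤ M :=
  calc ∑ i, w i * f i ≤ ∑ i, w i * M :=
        sum_le_sum fun i _ => mul_le_mul_of_nonneg_left (hf i) (hw0 i)
    _ = M := by rw [← sum_mul, hw1, one_mul]

lemma le_sum_mul_of_forall_le {m : ℝ} (hw0 : ∀ i, 0 ≤ w i) (hw1 : ∑ i, w i = 1)
    (hf : ∀ i, m ≤ f i) : m ≤ ∑ i, w i * f i :=
  calc m = ∑ i, w i * m := by rw [← sum_mul, hw1, one_mul]
    _ ≤ ∑ i, w i * f i := sum_le_sum fun i _ => mul_le_mul_of_nonneg_left (hf i) (hw0 i)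

lemma sum_sub_mul_le_sum_abs_sub_mul_half {p q : ι → ℝ} {B : ℝ} (hpq : ∑ i, p i = ∑ i, q i)
    (hf0 : ∀ i, 0 ≤ f i) (hfB : ∀ i, f i ≤ B) :
    ∑ i, (p i - q i) * f i ≤ (∑ i, |p i - q i|) * (B / 2) := by
  have hcenter : ∑ i, (p i - q i) * f i = ∑ i, (p i - q i) * (f i - B / 2) := by
    simp only [mul_sub, sum_sub_distrib, ← sum_mul, hpq, sub_self, zero_mul, sub_zero]
  rw [hcenter, sum_mul]
  refine sum_le_sum fun i _ => ?_
  calc (p i - q i) * (f i - B / 2) ≤ |(p i - q i) * (f i - B / 2)| := le_abs_self _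
    _ = |p i - q i| * |f i - B / 2| := abs_mul _ _
    _ ≤ |p i - q i| * (B / 2) :=
        mul_le_mul_of_nonneg_left (abs_le.2 ⟨by linarith [hf0 i], by linarith [hfB i]⟩)
          (abs_nonneg _)

end Averaging

section Contraction

variable {ι : Type*} [Finite ι] {f : ι → ℝ} {c γ : ℝ}

lemma le_div_one_sub_of_forall_le_add_mul (hγ : γ < 1)
    (h : ∀ M, (∀ j, f j ≤ M) → ∀ i, f i ≤ c + γ * M) (i : ι) : f i ≤ c / (1 - γ) := by
  have : Nonempty ι := ⟨i⟩
  obtain ⟨j, hj⟩ := Finite.exists_max f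
  have hfj := h (f j) hj j
  rw [le_div_iff₀ (by linarith)]
  calc f i * (1 - γ) ≤ f j * (1 - γ) := mul_le_mul_of_nonneg_right (hj i) (by linarith)
    _ ≤ c := by linarith

lemma div_one_sub_le_of_forall_add_mul_le (hγ : γ < 1)
    (h : ∀ m, (∀ j, m ≤ f j) → ∀ i, c + γ * m ≤ f i) (i : ι) : c / (1 - γ) ≤ f i := by
  have := le_div_one_sub_of_forall_le_add_mul (f := fun i => -f i) (c := -c) hγ
    (fun M hM i => by linarith [h (-M) (fun j => by linarith [hM j]) i]) i
  rw [neg_div] at this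
  linarith

end Contraction

section ValueFunction

variable {X U : Type*} [Fintype X] [Fintype U] {γ : ℝ} {π : X → U → ℝ}

def stateValue (π Q : X → U → ℝ) (x : X) : ℝ := ∑ u, π x u * Q x u

variable {r : X → U → ℝ} {p : X → U → X → ℝ} {Q : X → U → ℝ}

lemma stateValue_le_of_bellman (hγ0 : 0 ≤ γ) (hγ1 : γ < 1)
    (hπ0 : ∀ x u, 0 ≤ π x u) (hπ1 : ∀ x, ∑ u, π x u = 1) (hr1 : ∀ x u, r x u ≤ 1)
    (hp0 : ∀ x u x', 0 ≤ p x u x') (hp1 : ∀ x u, ∑ x', p x u x' = 1)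
    (hQ : ∀ x u, Q x u = r x u + γ * ∑ x', p x u x' * stateValue π Q x') (x : X) :
    stateValue π Q x ≤ 1 / (1 - γ) := by
  refine le_div_one_sub_of_forall_le_add_mul hγ1 (fun M hM x => ?_) x
  refine sum_mul_le_of_forall_le (hπ0 x) (hπ1 x) fun u => ?_
  rw [hQ]
  exact add_le_add (hr1 x u)
    (mul_le_mul_of_nonneg_left (sum_mul_le_of_forall_le (hp0 x u) (hp1 x u) hM) hγ0)

lemma stateValue_nonneg_of_bellman (hγ0 : 0 ≤ γ) (hγ1 : γ < 1)
    (hπ0 : ∀ x u, 0 ≤ π x u) (hπ1 : ∀ x, ∑ u, π x u = 1) (hr0 : ∀ x u, 0 ≤ r x u)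
    (hp0 : ∀ x u x', 0 ≤ p x u x') (hp1 : ∀ x u, ∑ x', p x u x' = 1)
    (hQ : ∀ x u, Q x u = r x u + γ * ∑ x', p x u x' * stateValue π Q x') (x : X) :
    0 ≤ stateValue π Q x := by
  rw [← zero_div (1 - γ)]
  refine div_one_sub_le_of_forall_add_mul_le hγ1 (fun m hm x => ?_) x
  refine le_sum_mul_of_forall_le (hπ0 x) (hπ1 x) fun u => ?_
  rw [hQ]
  exact add_le_add (hr0 x u)
    (mul_le_mul_of_nonneg_left (le_sum_mul_of_forall_le (hp0 x u) (hp1 x u) hm) hγ0)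

lemma stateValue_sub_le_of_bellman {δ : ℝ} (hγ0 : 0 ≤ γ) (hγ1 : γ < 1)
    (hπ0 : ∀ x u, 0 ≤ π x u) (hπ1 : ∀ x, ∑ u, π x u = 1) {pS pT : X → U → X → ℝ}
    (hpT0 : ∀ x u x', 0 ≤ pT x u x') (hpT1 : ∀ x u, ∑ x', pT x u x' = 1) {QS QT : X → U → ℝ}
    (hQS : ∀ x u, QS x u = r x u + γ * ∑ x', pS x u x' * stateValue π QS x')
    (hQT : ∀ x u, QT x u = r x u + γ * ∑ x', pT x u x' * stateValue π QT x')
    (hδ : ∀ x u, ∑ x', (pS x u x' - pT x u x') * stateValue π QS x' ≤ δ) (x : X) :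
    stateValue π QS x - stateValue π QT x ≤ γ * δ / (1 - γ) := by
  refine le_div_one_sub_of_forall_le_add_mul (f := fun x => stateValue π QS x - stateValue π QT x)
    hγ1 (fun M hM x => ?_) x
  have hQ_sub : ∀ u, QS x u - QT x u = γ * (∑ x', (pS x u x' - pT x u x') * stateValue π QS x'
      + ∑ x', pT x u x' * (stateValue π QS x' - stateValue π QT x')) := fun u => by
    rw [hQS, hQT]
    simp only [sub_mul, mul_sub, sum_sub_distrib]
    ring
  have hV_sub : stateValue π QS x - stateValue π QT x = ∑ u, π x u * (QS x u - QT x u) := by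
    simp only [stateValue, mul_sub, sum_sub_distrib]
  rw [hV_sub, ← mul_add]
  refine sum_mul_le_of_forall_le (hπ0 x) (hπ1 x) fun u => ?_
  rw [hQ_sub]
  exact mul_le_mul_of_nonneg_left
    (add_le_add (hδ x u) (sum_mul_le_of_forall_le (hpT0 x u) (hpT1 x u) hM)) hγ0

end ValueFunction

theorem target_value_lower_bound_general
    {X U : Type*} [Fintype X] [Fintype U]
    (γ : ℝ) (hγ0 : 0 ≤ γ) (hγ1 : γ < 1)
    (π : X → U → ℝ)
    (hπ_nonneg : ∀ x u, 0 ≤ π x u) (hπ_sum : ∀ x, ∑ u, π x u = 1)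
    (r : X → U → ℝ)
    (hr0 : ∀ x u, 0 ≤ r x u) (hr1 : ∀ x u, r x u ≤ 1)
    (pS pT : X → U → X → ℝ)
    (hpS_nonneg : ∀ x u x', 0 ≤ pS x u x') (hpS_sum : ∀ x u, ∑ x', pS x u x' = 1)
    (hpT_pos : ∀ x u x', 0 < pT x u x') (hpT_sum : ∀ x u, ∑ x', pT x u x' = 1)
    (QS QT : X → U → ℝ)
    (hQS : ∀ x u, QS x u = r x u + γ * ∑ x', pS x u x' * ∑ u', π x' u' * QS x' u')
    (hQT : ∀ x u, QT x u = r x u + γ * ∑ x', pT x u x' * ∑ u', π x' u' * QT x' u')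
    (d : X → ℝ) (hd_nonneg : ∀ x, 0 ≤ d x) (hd_sum : ∑ x, d x = 1)
    (ε : ℝ)
    (hKL : ∀ x u,
      Real.sqrt ((1 / 2) * ∑ x', pS x u x' * Real.log (pS x u x' / pT x u x')) ≤ ε) :
    ∑ s, d s * (∑ u, π s u * QT s u) ≥
      (∑ s, d s * (∑ u, π s u * QS s u)) - γ * ε / (1 - γ) ^ 2 := by
  have hVS_nonneg :=
    stateValue_nonneg_of_bellman hγ0 hγ1 hπ_nonneg hπ_sum hr0 hpS_nonneg hpS_sum hQS
  have hVS_le := stateValue_le_of_bellman hγ0 hγ1 hπ_nonneg hπ_sum hr1 hpS_nonneg hpS_sum hQS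
  have hdrift : ∀ x u, ∑ x', (pS x u x' - pT x u x') * stateValue π QS x' ≤ ε / (1 - γ) :=
    fun x u => calc
      _ ≤ (∑ x', |pS x u x' - pT x u x'|) * (1 / (1 - γ) / 2) :=
        sum_sub_mul_le_sum_abs_sub_mul_half (by rw [hpS_sum, hpT_sum]) hVS_nonneg hVS_le
      _ ≤ 2 * ε * (1 / (1 - γ) / 2) := by
        gcongr
        exact sum_abs_sub_le_two_mul_of_sqrt_le (hpS_nonneg x u) (hpT_pos x u) (hpS_sum x u)
          (hpT_sum x u) (hKL x u)
      _ = ε / (1 - γ) := by field_simp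
  have hgap := stateValue_sub_le_of_bellman hγ0 hγ1 hπ_nonneg hπ_sum
    (fun x u x' => (hpT_pos x u x').le) hpT_sum hQS hQT hdrift
  have hmean : ∑ s, d s * (stateValue π QS s - stateValue π QT s) ≤ γ * ε / (1 - γ) ^ 2 := by
    convert sum_mul_le_of_forall_le hd_nonneg hd_sum hgap using 1
    field_simp
  simp only [mul_sub, sum_sub_distrib] at hmean
  exact sub_le_comm.1 hmean

/-- **Theorem 1.**
If `√((1/2) D_KL(pS(·|x,u) ‖ pT(·|x,u))) ≤ ε` for every `(x,u)`, then for any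
distribution `d` over states,
`Σ_s d(s) V_{pT}^π(s) ≥ Σ_s d(s) V_{pS}^π(s) − γε/(1−γ)²`. -/
theorem target_value_lower_bound
    {X U : Type*} [Fintype X] [Fintype U] [Nonempty X] [Nonempty U]
    (γ : ℝ) (hγ0 : 0 ≤ γ) (hγ1 : γ < 1)
    (π : X → U → ℝ)
    (hπ_nonneg : ∀ x u, 0 ≤ π x u) (hπ_sum : ∀ x, ∑ u, π x u = 1)
    (r : X → U → ℝ)
    (hr0 : ∀ x u, 0 ≤ r x u) (hr1 : ∀ x u, r x u ≤ 1)
    (pS pT : X → U → X → ℝ)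
    (hpS_nonneg : ∀ x u x', 0 ≤ pS x u x') (hpS_sum : ∀ x u, ∑ x', pS x u x' = 1)
    (hpT_pos : ∀ x u x', 0 < pT x u x') (hpT_sum : ∀ x u, ∑ x', pT x u x' = 1)
    (QS QT : X → U → ℝ)
    (hQS : ∀ x u, QS x u = r x u + γ * ∑ x', pS x u x' * ∑ u', π x' u' * QS x' u')
    (hQT : ∀ x u, QT x u = r x u + γ * ∑ x', pT x u x' * ∑ u', π x' u' * QT x' u')
    (d : X → ℝ) (hd_nonneg : ∀ x, 0 ≤ d x) (hd_sum : ∑ x, d x = 1)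
    (ε : ℝ) (hε : 0 ≤ ε)
    (hKL : ∀ x u,
      Real.sqrt ((1 / 2) * ∑ x', pS x u x' * Real.log (pS x u x' / pT x u x')) ≤ ε) :
    ∑ s, d s * (∑ u, π s u * QT s u) ≥
      (∑ s, d s * (∑ u, π s u * QS s u)) - γ * ε / (1 - γ) ^ 2 :=
  target_value_lower_bound_general γ hγ0 hγ1 π hπ_nonneg hπ_sum r hr0 hr1 pS pT hpS_nonneg hpS_sum
    hpT_pos hpT_sum QS QT hQS hQT d hd_nonneg hd_sum ε hKL
end

section
/- Let (X,U,p,r,γ) be a finite MDP with rewards satisfying 0 ≤ r(x,u) ≤ 1 for all (x,u). Let π_b (behavior policy), π_i, and π_{i+1} be policies whose state–action value functions satisfy their Bellman equations, with value functions V^{π_i}, V^{π_{i+1}} and advantage function A^{π_i}, and assume π_{i+1}(u|x) > 0 for all x ∈ X and u ∈ U. Let μ be a probability mass function on X and d_{π_b} the discounted state visitation distribution of π_b with initial distribution μ. Then (1−γ) ( Σ_{x∈X} μ(x) V^{π_{i+1}}(x) − Σ_{x∈X} μ(x) V^{π_i}(x) ) ≥ Σ_{x∈X} d_{π_b}(x)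 Σ_{u∈U} π_b(u|x) A^{π_i}(x,u) − (√2/(1−γ)) Σ_{x∈X} d_{π_b}(x) √( D_KL(π_b(·|x) ‖ π_{i+1}(·|x)) ). (Theorem 2.) -/
/-!
Summing the Bellman equations of `πi` and `πi1` against the visitation equation of `d` gives the
performance-difference identity: the left-hand side equals the expected advantage of `πi` under
`d` and `πb` plus `∑ x, d x * ∑ u, (πi1 x u - πb x u) * Qi1 x u`. Since `πi1 x` and `πb x` have
the same mass and `Qi1` takes values in `[0, 1 / (1 - γ)]`, each inner sum is bounded by
`‖πb x - πi1 x‖₁ / (2 (1 - γ))`. Finally `‖P - Q‖₁² ≤ 4 ∑ (√P - √Q)² ≤ 4 KL(P ‖ Q)`, by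
Cauchy–Schwarz and `log x ≤ x - 1`. This Hellinger bound is weaker than Pinsker's inequality by
a factor `√2`, which the centring of `Qi1` more than recovers.
-/

open Finset

lemma sq_sqrt_sub_sqrt_le_mul_log_div_sub_add {p q : ℝ} (hp : 0 ≤ p) (hq : 0 < q) :
    (√p - √q) ^ 2 ≤ p * Real.log (p / q) - p + q := by
  rcases hp.eq_or_lt with rfl | hp
  · simp [Real.sq_sqrt hq.le]
  -- `log x ≤ x - 1` at `x = √q / √p`
  have hlog := Real.log_le_sub_one_of_pos (div_pos (Real.sqrt_pos.2 hq) (Real.sqrt_pos.2 hp))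
  rw [Real.log_div (Real.sqrt_pos.2 hq).ne' (Real.sqrt_pos.2 hp).ne', Real.log_sqrt hq.le,
    Real.log_sqrt hp.le] at hlog
  have hpq : p * (√q / √p) = √p * √q := by
    field_simp
    rw [Real.sq_sqrt hp.le]
  rw [Real.log_div hp.ne' hq.ne', sub_sq, Real.sq_sqrt hp.le, Real.sq_sqrt hq.le]
  linarith [mul_le_mul_of_nonneg_left hlog hp.le]

section FiniteDistributions

variable {ι : Type*} [Fintype ι] {P Q : ι → ℝ}

lemma sum_mul_le_of_sum_eq_one {w f : ι → ℝ} {M : ℝ} (hw : ∀ i, 0 ≤ w i)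
    (hw_sum : ∑ i, w i = 1) (hf : ∀ i, f i ≤ M) : ∑ i, w i * f i ≤ M :=
  calc ∑ i, w i * f i ≤ ∑ i, w i * M :=
        sum_le_sum fun i _ => mul_le_mul_of_nonneg_left (hf i) (hw i)
    _ = M := by rw [← sum_mul, hw_sum, one_mul]

lemma sum_sq_sqrt_sub_sqrt_le_kl (hP : ∀ i, 0 ≤ P i) (hQ : ∀ i, 0 < Q i)
    (hP_sum : ∑ i, P i = 1) (hQ_sum : ∑ i, Q i = 1) :
    ∑ i, (√(P i) - √(Q i)) ^ 2 ≤ ∑ i, P i * Real.log (P i / Q i) := by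
  calc ∑ i, (√(P i) - √(Q i)) ^ 2 ≤ ∑ i, (P i * Real.log (P i / Q i) - P i + Q i) :=
        sum_le_sum fun i _ => sq_sqrt_sub_sqrt_le_mul_log_div_sub_add (hP i) (hQ i)
    _ = ∑ i, P i * Real.log (P i / Q i) := by
        rw [sum_add_distrib, sum_sub_distrib, hP_sum, hQ_sum]; ring

lemma sum_abs_sub_le_two_mul_sqrt_kl (hP : ∀ i, 0 ≤ P i) (hQ : ∀ i, 0 < Q i)
    (hP_sum : ∑ i, P i = 1) (hQ_sum : ∑ i, Q i = 1) :
    ∑ i, |P i - Q i| ≤ 2 * √(∑ i, P i * Real.log (P i / Q i)) := by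
  have hfactor : ∀ i, |P i - Q i| = |√(P i) - √(Q i)| * (√(P i) + √(Q i)) := fun i => by
    rw [← abs_of_nonneg (by positivity : 0 ≤ √(P i) + √(Q i)), ← abs_mul]
    congr 1
    linear_combination -Real.sq_sqrt (hP i) + Real.sq_sqrt (hQ i).le
  have hsum_sq : ∑ i, (√(P i) + √(Q i)) ^ 2 ≤ 4 := by
    calc ∑ i, (√(P i) + √(Q i)) ^ 2 ≤ ∑ i, 2 * (P i + Q i) :=
          sum_le_sum fun i _ => by
            linarith [sq_nonneg (√(P i) - √(Q i)), Real.sq_sqrt (hP i), Real.sq_sqrt (hQ i).le]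
      _ = 4 := by rw [← mul_sum, sum_add_distrib, hP_sum, hQ_sum]; norm_num
  have hcs := sum_mul_sq_le_sq_mul_sq univ (fun i => |√(P i) - √(Q i)|)
    (fun i => √(P i) + √(Q i))
  simp only [sq_abs, ← hfactor] at hcs
  have hkl := sum_sq_sqrt_sub_sqrt_le_kl hP hQ hP_sum hQ_sum
  have hH : 0 ≤ ∑ i, (√(P i) - √(Q i)) ^ 2 := sum_nonneg fun i _ => sq_nonneg _
  calc ∑ i, |P i - Q i| ≤ √(4 * ∑ i, P i * Real.log (P i / Q i)) := by
        refine Real.le_sqrt_of_sq_le ?_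
        linarith [mul_le_mul_of_nonneg_left hsum_sq hH]
    _ = 2 * √(∑ i, P i * Real.log (P i / Q i)) := by
        rw [Real.sqrt_mul (by norm_num), show (4 : ℝ) = 2 ^ 2 by norm_num,
          Real.sqrt_sq (by norm_num)]

lemma abs_sum_sub_mul_le_of_mem_Icc {a b f : ι → ℝ} {B : ℝ} (hab : ∑ i, a i = ∑ i, b i)
    (hf : ∀ i, f i ∈ Set.Icc 0 B) :
    |∑ i, (a i - b i) * f i| ≤ B / 2 * ∑ i, |a i - b i| := by
  have hcentre : ∑ i, (a i - b i) * f i = ∑ i, (a i - b i) * (f i - B / 2) := by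
    simp only [mul_sub, sum_sub_distrib, ← sum_mul, hab, sub_self, zero_mul, sub_zero]
  rw [hcentre, mul_sum]
  refine (abs_sum_le_sum_abs _ _).trans (sum_le_sum fun i _ => ?_)
  rw [abs_mul, mul_comm]
  obtain ⟨hf0, hfB⟩ := hf i
  exact mul_le_mul_of_nonneg_right (abs_le.2 ⟨by linarith, by linarith⟩) (abs_nonneg _)

lemma abs_sum_sub_mul_le_mul_sqrt_kl {f : ι → ℝ} {B : ℝ} (hP : ∀ i, 0 ≤ P i) (hQ : ∀ i, 0 < Q i)
    (hP_sum : ∑ i, P i = 1) (hQ_sum : ∑ i, Q i = 1) (hB : 0 ≤ B) (hf : ∀ i, f i ∈ Set.Icc 0 B) :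
    |∑ i, (Q i - P i) * f i| ≤ B * √(∑ i, P i * Real.log (P i / Q i)) :=
  calc |∑ i, (Q i - P i) * f i| ≤ B / 2 * ∑ i, |Q i - P i| :=
        abs_sum_sub_mul_le_of_mem_Icc (by rw [hP_sum, hQ_sum]) hf
    _ = B / 2 * ∑ i, |P i - Q i| := by simp only [abs_sub_comm (Q _)]
    _ ≤ B / 2 * (2 * √(∑ i, P i * Real.log (P i / Q i))) := by
        gcongr
        exact sum_abs_sub_le_two_mul_sqrt_kl hP hQ hP_sum hQ_sum
    _ = B * √(∑ i, P i * Real.log (P i / Q i)) := by ring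

end FiniteDistributions

section MDP

variable {X U : Type*} [Fintype X] [Fintype U] {γ : ℝ} {p : X → U → X → ℝ} {r : X → U → ℝ}

lemma le_div_one_sub_of_bellman (hγ0 : 0 ≤ γ) (hγ1 : γ < 1)
    (hp_nonneg : ∀ x u x', 0 ≤ p x u x') (hp_sum : ∀ x u, ∑ x', p x u x' = 1)
    {π Q : X → U → ℝ} (hπ_nonneg : ∀ x u, 0 ≤ π x u) (hπ_sum : ∀ x, ∑ u, π x u = 1)
    (hQ : ∀ x u, Q x u = r x u + γ * ∑ x', p x u x' * ∑ u', π x' u' * Q x' u')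
    {b : ℝ} (hr : ∀ x u, r x u ≤ b) (x : X) (u : U) : Q x u ≤ b / (1 - γ) := by
  have : Nonempty (X × U) := ⟨(x, u)⟩
  obtain ⟨z, hz⟩ := Finite.exists_max fun z : X × U => Q z.1 z.2
  have hnext : ∑ x', p z.1 z.2 x' * ∑ u', π x' u' * Q x' u' ≤ Q z.1 z.2 :=
    sum_mul_le_of_sum_eq_one (hp_nonneg _ _) (hp_sum _ _) fun x' =>
      sum_mul_le_of_sum_eq_one (hπ_nonneg x') (hπ_sum x') fun u' => hz (x', u')
  have hmax : Q z.1 z.2 ≤ b + γ * Q z.1 z.2 :=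
    calc Q z.1 z.2 = r z.1 z.2 + γ * ∑ x', p z.1 z.2 x' * ∑ u', π x' u' * Q x' u' := hQ _ _
      _ ≤ b + γ * Q z.1 z.2 := add_le_add (hr _ _) (mul_le_mul_of_nonneg_left hnext hγ0)
  refine (hz (x, u)).trans ?_
  rw [le_div_iff₀ (by linarith)]
  linarith

lemma bellman_mem_Icc (hγ0 : 0 ≤ γ) (hγ1 : γ < 1)
    (hp_nonneg : ∀ x u x', 0 ≤ p x u x') (hp_sum : ∀ x u, ∑ x', p x u x' = 1)
    (hr0 : ∀ x u, 0 ≤ r x u) (hr1 : ∀ x u, r x u ≤ 1)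
    {π Q : X → U → ℝ} (hπ_nonneg : ∀ x u, 0 ≤ π x u) (hπ_sum : ∀ x, ∑ u, π x u = 1)
    (hQ : ∀ x u, Q x u = r x u + γ * ∑ x', p x u x' * ∑ u', π x' u' * Q x' u') (x : X) (u : U) :
    Q x u ∈ Set.Icc 0 (1 / (1 - γ)) := by
  have hnegQ : ∀ y v, -Q y v = -r y v + γ * ∑ x', p y v x' * ∑ u', π x' u' * -Q x' u' :=
    fun y v => by
      simp only [mul_neg, sum_neg_distrib]
      rw [hQ y v]
      ring
  have hlow := le_div_one_sub_of_bellman hγ0 hγ1 hp_nonneg hp_sum hπ_nonneg hπ_sum hnegQ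
    (b := 0) (fun y v => neg_nonpos.2 (hr0 y v)) x u
  exact ⟨by simpa using hlow,
    le_div_one_sub_of_bellman hγ0 hγ1 hp_nonneg hp_sum hπ_nonneg hπ_sum hQ hr1 x u⟩

lemma sum_visitation_mul_sub_eq {πb : X → U → ℝ} {μ d : X → ℝ}
    (hd_flow : ∀ x', d x' = (1 - γ) * μ x' + γ * ∑ x, ∑ u, d x * πb x u * p x u x')
    (f : X → ℝ) :
    ∑ x, d x * (f x - γ * ∑ u, πb x u * ∑ x', p x u x' * f x') = (1 - γ) * ∑ x, μ x * f x := by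
  have hswap : ∑ x, d x * ∑ u, πb x u * ∑ x', p x u x' * f x'
      = ∑ x', (∑ x, ∑ u, d x * πb x u * p x u x') * f x' := by
    calc ∑ x, d x * ∑ u, πb x u * ∑ x', p x u x' * f x'
        = ∑ x, ∑ u, ∑ x', d x * πb x u * p x u x' * f x' := by simp only [mul_sum, mul_assoc]
      _ = ∑ x, ∑ x', ∑ u, d x * πb x u * p x u x' * f x' := sum_congr rfl fun _ _ => sum_comm
      _ = ∑ x', ∑ x, ∑ u, d x * πb x u * p x u x' * f x' := sum_comm
      _ = ∑ x', (∑ x, ∑ u, d x * πb x u * p x u x') * f x' := by simp only [sum_mul]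
  have hinflow : ∀ x', γ * ∑ x, ∑ u, d x * πb x u * p x u x' = d x' - (1 - γ) * μ x' :=
    fun x' => by linarith [hd_flow x']
  calc ∑ x, d x * (f x - γ * ∑ u, πb x u * ∑ x', p x u x' * f x')
      = ∑ x, d x * f x - γ * ∑ x, d x * ∑ u, πb x u * ∑ x', p x u x' * f x' := by
        simp only [mul_sub, sum_sub_distrib, mul_left_comm (d _) γ, ← mul_sum]
    _ = ∑ x, d x * f x - ∑ x', (d x' - (1 - γ) * μ x') * f x' := by
        rw [hswap, mul_sum]
        simp only [← mul_assoc, hinflow]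
    _ = (1 - γ) * ∑ x, μ x * f x := by
        simp only [sub_mul, sum_sub_distrib, mul_assoc, ← mul_sum, sub_sub_cancel]

lemma performance_difference {πb π π' Q Q' : X → U → ℝ} {μ d : X → ℝ}
    (hπb_sum : ∀ x, ∑ u, πb x u = 1)
    (hQ : ∀ x u, Q x u = r x u + γ * ∑ x', p x u x' * ∑ u', π x' u' * Q x' u')
    (hQ' : ∀ x u, Q' x u = r x u + γ * ∑ x', p x u x' * ∑ u', π' x' u' * Q' x' u')
    (hd_flow : ∀ x', d x' = (1 - γ) * μ x' + γ * ∑ x, ∑ u, d x * πb x u * p x u x') :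
    (1 - γ) * ((∑ x, μ x * ∑ u, π' x u * Q' x u) - ∑ x, μ x * ∑ u, π x u * Q x u)
      = (∑ x, d x * ∑ u, πb x u * (Q x u - ∑ u', π x u' * Q x u'))
        + ∑ x, d x * ∑ u, (π' x u - πb x u) * Q' x u := by
  set f : X → ℝ := fun x => (∑ u, π' x u * Q' x u) - ∑ u, π x u * Q x u
  have hQ_sub : ∀ x u, Q' x u - Q x u = γ * ∑ x', p x u x' * f x' := fun x u => by
    rw [hQ' x u, hQ x u]
    simp only [f, mul_sub, sum_sub_distrib]
    ring
  have hstate : ∀ x, (∑ u, πb x u * (Q x u - ∑ u', π x u' * Q x u'))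
      + ∑ u, (π' x u - πb x u) * Q' x u
      = f x - γ * ∑ u, πb x u * ∑ x', p x u x' * f x' := fun x => by
    calc (∑ u, πb x u * (Q x u - ∑ u', π x u' * Q x u')) + ∑ u, (π' x u - πb x u) * Q' x u
        = f x - ∑ u, πb x u * (Q' x u - Q x u) := by
          simp only [f, mul_sub, sub_mul, sum_sub_distrib, ← sum_mul, hπb_sum, one_mul]
          ring
      _ = f x - γ * ∑ u, πb x u * ∑ x', p x u x' * f x' := by
          simp only [hQ_sub, mul_left_comm (πb x _) γ, ← mul_sum]
  rw [← sum_add_distrib]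
  simp only [← mul_add, hstate]
  rw [sum_visitation_mul_sub_eq hd_flow]
  simp only [f, mul_sub, sum_sub_distrib]

end MDP

theorem policy_improvement_kl_bound_general
    {X U : Type*} [Fintype X] [Fintype U]
    (γ : ℝ) (hγ0 : 0 ≤ γ) (hγ1 : γ < 1)
    (p : X → U → X → ℝ)
    (hp_nonneg : ∀ x u x', 0 ≤ p x u x')
    (hp_sum : ∀ x u, ∑ x', p x u x' = 1)
    (r : X → U → ℝ)
    (hr0 : ∀ x u, 0 ≤ r x u) (hr1 : ∀ x u, r x u ≤ 1)
    (πb πi πi1 : X → U → ℝ)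
    (hπb_nonneg : ∀ x u, 0 ≤ πb x u) (hπb_sum : ∀ x, ∑ u, πb x u = 1)
    (hπi1_pos : ∀ x u, 0 < πi1 x u) (hπi1_sum : ∀ x, ∑ u, πi1 x u = 1)
    (Qi Qi1 : X → U → ℝ)
    (hQi : ∀ x u, Qi x u = r x u + γ * ∑ x', p x u x' * ∑ u', πi x' u' * Qi x' u')
    (hQi1 : ∀ x u, Qi1 x u = r x u + γ * ∑ x', p x u x' * ∑ u', πi1 x' u' * Qi1 x' u')
    (μ : X → ℝ)
    (d : X → ℝ)
    (hd_flow : ∀ x', d x' = (1 - γ) * μ x' + γ * ∑ x, ∑ u, d x * πb x u * p x u x')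
    (hd_nonneg : ∀ x, 0 ≤ d x) :
    (1 - γ) *
        ((∑ x, μ x * ∑ u, πi1 x u * Qi1 x u) - ∑ x, μ x * ∑ u, πi x u * Qi x u) ≥
      (∑ x, d x * ∑ u, πb x u * (Qi x u - ∑ u', πi x u' * Qi x u')) -
        (Real.sqrt 2 / (1 - γ)) *
          ∑ x, d x *
            Real.sqrt (∑ u, πb x u * Real.log (πb x u / πi1 x u)) := by
  have hγ : 0 < 1 - γ := by linarith
  have hQi1_mem := bellman_mem_Icc hγ0 hγ1 hp_nonneg hp_sum hr0 hr1
    (fun x u => (hπi1_pos x u).le) hπi1_sum hQi1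
  have hstate : ∀ x, -(√2 / (1 - γ) * √(∑ u, πb x u * Real.log (πb x u / πi1 x u)))
      ≤ ∑ u, (πi1 x u - πb x u) * Qi1 x u := fun x => by
    have hbound := abs_sum_sub_mul_le_mul_sqrt_kl (hπb_nonneg x) (hπi1_pos x) (hπb_sum x)
      (hπi1_sum x) (by positivity) (hQi1_mem x)
    have hconst : 1 / (1 - γ) * √(∑ u, πb x u * Real.log (πb x u / πi1 x u))
        ≤ √2 / (1 - γ) * √(∑ u, πb x u * Real.log (πb x u / πi1 x u)) := by
      gcongr
      exact Real.one_lt_sqrt_two.le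
    linarith [neg_abs_le (∑ u, (πi1 x u - πb x u) * Qi1 x u)]
  rw [ge_iff_le, performance_difference hπb_sum hQi hQi1 hd_flow, mul_sum, sub_eq_add_neg,
    ← sum_neg_distrib]
  gcongr with x
  linarith [mul_le_mul_of_nonneg_left (hstate x) (hd_nonneg x)]

/-- **Theorem 2.**
For a finite MDP with rewards in `[0,1]`, policies `πb` (behavior), `πi`, `πi1` with
Bellman-consistent Q-functions, `πi1` everywhere positive, and `d` the discounted
state visitation distribution of `πb`:
`(1−γ)(Σ_x μ(x) V^{πi1}(x) − Σ_x μ(x) V^{πi}(x))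
  ≥ Σ_x d(x) Σ_u πb(u|x) A^{πi}(x,u)
    − (√2/(1−γ)) Σ_x d(x) √(D_KL(πb(·|x) ‖ πi1(·|x)))`. -/
theorem policy_improvement_kl_bound
    {X U : Type*} [Fintype X] [Fintype U] [Nonempty X] [Nonempty U]
    (γ : ℝ) (hγ0 : 0 ≤ γ) (hγ1 : γ < 1)
    (p : X → U → X → ℝ)
    (hp_nonneg : ∀ x u x', 0 ≤ p x u x')
    (hp_sum : ∀ x u, ∑ x', p x u x' = 1)
    (r : X → U → ℝ)
    (hr0 : ∀ x u, 0 ≤ r x u) (hr1 : ∀ x u, r x u ≤ 1)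
    (πb πi πi1 : X → U → ℝ)
    (hπb_nonneg : ∀ x u, 0 ≤ πb x u) (hπb_sum : ∀ x, ∑ u, πb x u = 1)
    (hπi_nonneg : ∀ x u, 0 ≤ πi x u) (hπi_sum : ∀ x, ∑ u, πi x u = 1)
    (hπi1_pos : ∀ x u, 0 < πi1 x u) (hπi1_sum : ∀ x, ∑ u, πi1 x u = 1)
    (Qb Qi Qi1 : X → U → ℝ)
    (hQb : ∀ x u, Qb x u = r x u + γ * ∑ x', p x u x' * ∑ u', πb x' u' * Qb x' u')
    (hQi : ∀ x u, Qi x u = r x u + γ * ∑ x', p x u x' * ∑ u', πi x' u' * Qi x' u')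
    (hQi1 : ∀ x u, Qi1 x u = r x u + γ * ∑ x', p x u x' * ∑ u', πi1 x' u' * Qi1 x' u')
    (μ : X → ℝ) (hμ_nonneg : ∀ x, 0 ≤ μ x) (hμ_sum : ∑ x, μ x = 1)
    (d : X → ℝ)
    (hd_flow : ∀ x', d x' = (1 - γ) * μ x' + γ * ∑ x, ∑ u, d x * πb x u * p x u x')
    (hd_nonneg : ∀ x, 0 ≤ d x) (hd_sum : ∑ x, d x = 1) :
    (1 - γ) *
        ((∑ x, μ x * ∑ u, πi1 x u * Qi1 x u) - ∑ x, μ x * ∑ u, πi x u * Qi x u) ≥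
      (∑ x, d x * ∑ u, πb x u * (Qi x u - ∑ u', πi x u' * Qi x u')) -
        (Real.sqrt 2 / (1 - γ)) *
          ∑ x, d x *
            Real.sqrt (∑ u, πb x u * Real.log (πb x u / πi1 x u)) :=
  policy_improvement_kl_bound_general γ hγ0 hγ1 p hp_nonneg hp_sum r hr0 hr1 πb πi πi1 hπb_nonneg
    hπb_sum hπi1_pos hπi1_sum Qi Qi1 hQi hQi1 μ d hd_flow hd_nonneg
end
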